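/- arXiv:1808.02592 — 6 statements merged into one kernel-verified Lean document; each statement's English description precedes it below -/
import Mathlib

section
/- Let (w_i)_{i≥1} be a strictly increasing sequence of positive integers, for 2 ≤ j ≤ i let c_{ij} := ((w_i / w_{i-j+1})² − 1)⁻¹, and define r_{ij} for 1 ≤ j ≤ i by r_{i1} := (−1)^{i−1} and r_{ij} := r_{i,j−1} + c_{ij}(r_{i,j−1} − r_{i−1,j−1}) for 2 ≤ j ≤ i. Then for all 1 ≤ j ≤ i the sign of r_{ij} alternates with i, i.e. (−1)^{i−1} r_{ij} > 0. -/
/-! Induction on `j`. Multiplying the recurrence by `s = (-1)^(i-1)` gives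
`s r_{ij} = s r_{i,j-1} + c_{ij} (s r_{i,j-1} + (-s) r_{i-1,j-1})`, where both
`s r_{i,j-1}` and `(-s) r_{i-1,j-1}` are positive by induction and `c_{ij} > 0`
because `w_{i-j+1} < w_i`. -/

lemma inv_sq_div_sub_one_pos {a b : ℝ} (hb : 0 < b) (hab : b < a) :
    0 < ((a / b) ^ 2 - 1)⁻¹ := by
  have h : 1 < a / b := (one_lt_div hb).mpr hab
  have : 1 < (a / b) ^ 2 := one_lt_pow₀ h two_ne_zero
  exact inv_pos.mpr (sub_pos.mpr this)

lemma mul_add_mul_sub_pos {s x y c : ℝ} (hc : 0 < c) (hx : 0 < s * x) (hy : 0 < -s * y) :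
    0 < s * (x + c * (x - y)) := by
  nlinarith [mul_pos hc (add_pos hx hy)]

/-- With a strictly increasing positive support sequence, the round-off
amplification factors `r i j` of the extrapolation process alternate in sign
with `i`: `(-1)^(i-1) * r i j > 0` for all `1 ≤ j ≤ i`. -/
theorem extrapolation_amplification_sign_alternates
    (w : ℕ → ℕ)
    (hw_pos : ∀ i, 1 ≤ i → 0 < w i)
    (hw_mono : ∀ i j, 1 ≤ i → i < j → w i < w j)
    (c : ℕ → ℕ → ℝ)
    (hc : ∀ i j, 2 ≤ j → j ≤ i →
      c i j = (((w i : ℝ) / (w (i - j + 1) : ℝ)) ^ 2 - 1)⁻¹)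
    (r : ℕ → ℕ → ℝ)
    (hr1 : ∀ i, 1 ≤ i → r i 1 = (-1 : ℝ) ^ (i - 1))
    (hr : ∀ i j, 2 ≤ j → j ≤ i →
      r i j = r i (j - 1) + c i j * (r i (j - 1) - r (i - 1) (j - 1))) :
    ∀ i j, 1 ≤ j → j ≤ i → 0 < (-1 : ℝ) ^ (i - 1) * r i j := by
  have hc_pos : ∀ i j, 2 ≤ j → j ≤ i → 0 < c i j := fun i j hj hji => by
    rw [hc i j hj hji]
    exact inv_sq_div_sub_one_pos (mod_cast hw_pos _ (by omega))
      (mod_cast hw_mono _ _ (by omega) (by omega))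
  intro i j hj hji
  induction j, hj using Nat.le_induction generalizing i with
  | base => rw [hr1 i hji]; exact mul_self_pos.mpr (pow_ne_zero _ (by norm_num))
  | succ j hj ih =>
    obtain ⟨k, rfl⟩ : ∃ k, i = k + 2 := ⟨i - 2, by omega⟩
    have hcur : 0 < (-1 : ℝ) ^ (k + 1) * r (k + 2) j := ih (k + 2) (by omega)
    have hprev : 0 < -(-1 : ℝ) ^ (k + 1) * r (k + 1) j := by
      rw [pow_succ, mul_neg_one, neg_neg]; exact ih (k + 1) (by omega)
    rw [hr _ _ (by omega) hji]
    exact mul_add_mul_sub_pos (hc_pos _ _ (by omega) hji) hcur hprev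
end

section
/- Let (w_i)_{i≥1} be a strictly increasing sequence of positive integers, for 2 ≤ j ≤ i let c_{ij} := ((w_i / w_{i-j+1})² − 1)⁻¹, and define r_{ij} for 1 ≤ j ≤ i by r_{i1} := (−1)^{i−1} and r_{ij} := r_{i,j−1} + c_{ij}(r_{i,j−1} − r_{i−1,j−1}) for 2 ≤ j ≤ i. Then the magnitudes satisfy |r_{ij}| = (1 + c_{ij}) |r_{i,j−1}| + c_{ij} |r_{i−1,j−1}| for all 2 ≤ j ≤ i; in particular the errors from consecutive rows never cancel but always add in magnitude. -/
/-!
The coefficients `c i j` are nonnegative because `w` increases. By induction on `j`, every entry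
of row `i` then has the sign `(-1) ^ (i + 1)` of its first entry: `r i j` is a combination with
nonnegative weights of `r i (j - 1)` and `-r (i - 1) (j - 1)`, which both carry that sign. Hence
`r i (j - 1)` and `r (i - 1) (j - 1)` have opposite signs, and in
`r i j = (1 + c i j) * r i (j - 1) + c i j * (-r (i - 1) (j - 1))` the two summands cannot cancel.
-/

lemma abs_add_of_mul_nonneg {a b : ℝ} (h : 0 ≤ a * b) : |a + b| = |a| + |b| :=
  (abs_add_eq_add_abs_iff a b).2 (mul_nonneg_iff.1 h)

lemma abs_add_mul_sub_of_mul_nonpos {c x y : ℝ} (hc : 0 ≤ c) (hxy : x * y ≤ 0) :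
    |x + c * (x - y)| = (1 + c) * |x| + c * |y| := by
  have h1c : 0 ≤ 1 + c := by linarith
  have hsplit : x + c * (x - y) = (1 + c) * x + c * (-y) := by ring
  have hsame : 0 ≤ (1 + c) * x * (c * (-y)) := by
    have := mul_nonneg (mul_nonneg h1c hc) (neg_nonneg.2 hxy)
    linarith
  rw [hsplit, abs_add_of_mul_nonneg hsame, abs_mul, abs_mul, abs_neg, abs_of_nonneg hc,
    abs_of_nonneg h1c]

lemma inv_sq_div_sub_one_nonneg {a b : ℝ} (ha : 0 < a) (hab : a ≤ b) :
    0 ≤ ((b / a) ^ 2 - 1)⁻¹ :=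
  inv_nonneg.2 (sub_nonneg.2 (one_le_pow₀ ((one_le_div ha).2 hab)))

section Amplification

variable {c r : ℕ → ℕ → ℝ}

lemma amplification_sign (hc : ∀ i j, 2 ≤ j → j ≤ i → 0 ≤ c i j)
    (hr1 : ∀ i, 1 ≤ i → r i 1 = (-1 : ℝ) ^ (i - 1))
    (hr : ∀ i j, 2 ≤ j → j ≤ i →
      r i j = r i (j - 1) + c i j * (r i (j - 1) - r (i - 1) (j - 1)))
    {j : ℕ} (hj : 1 ≤ j) : ∀ i, j ≤ i → 0 ≤ (-1 : ℝ) ^ (i + 1) * r i j := by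
  induction j, hj using Nat.le_induction with
  | base =>
    intro i hi
    obtain ⟨k, rfl⟩ : ∃ k, i = k + 1 := ⟨i - 1, by omega⟩
    rw [hr1 _ hi, Nat.add_sub_cancel, ← pow_add,
      (show Even (k + 1 + 1 + k) from ⟨k + 1, by ring⟩).neg_one_pow]
    exact zero_le_one
  | succ j hj ih =>
    intro i hi
    obtain ⟨k, rfl⟩ : ∃ k, i = k + 1 := ⟨i - 1, by omega⟩
    have hx := ih (k + 1) (by omega)
    have hy := ih k (by omega)
    have hcn := hc (k + 1) (j + 1) (by omega) hi
    rw [hr _ _ (by omega) hi, Nat.add_sub_cancel, Nat.add_sub_cancel]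
    set s : ℝ := (-1) ^ (k + 1 + 1)
    have hy' : 0 ≤ -(s * r k j) := by
      rwa [show s = -(-1) ^ (k + 1) by simp only [s, pow_succ _ (k + 1), mul_neg_one],
        neg_mul, neg_neg]
    have hexpand : s * (r (k + 1) j + c (k + 1) (j + 1) * (r (k + 1) j - r k j)) =
        (1 + c (k + 1) (j + 1)) * (s * r (k + 1) j) + c (k + 1) (j + 1) * -(s * r k j) := by
      ring
    rw [hexpand]
    positivity

lemma amplification_mul_nonpos (hc : ∀ i j, 2 ≤ j → j ≤ i → 0 ≤ c i j)
    (hr1 : ∀ i, 1 ≤ i → r i 1 = (-1 : ℝ) ^ (i - 1))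
    (hr : ∀ i j, 2 ≤ j → j ≤ i →
      r i j = r i (j - 1) + c i j * (r i (j - 1) - r (i - 1) (j - 1)))
    {i j : ℕ} (hj : 1 ≤ j) (hji : j < i) : r i j * r (i - 1) j ≤ 0 := by
  obtain ⟨k, rfl⟩ : ∃ k, i = k + 1 := ⟨i - 1, by omega⟩
  have hx := amplification_sign hc hr1 hr hj (k + 1) hji.le
  have hy := amplification_sign hc hr1 hr hj k (by omega)
  have hs : ((-1 : ℝ) ^ (k + 1 + 1)) * (-1) ^ (k + 1) = -1 := by
    rw [← pow_add, (show Odd (k + 1 + 1 + (k + 1)) from ⟨k + 1, by ring⟩).neg_one_pow]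
  have hprod := mul_nonneg hx hy
  rw [mul_mul_mul_comm, hs] at hprod
  rw [Nat.add_sub_cancel]
  linarith

end Amplification

/-- With a strictly increasing positive support sequence, the magnitudes of the
round-off amplification factors satisfy
`|r i j| = (1 + c i j) * |r i (j-1)| + c i j * |r (i-1) (j-1)|`:
errors from consecutive rows never cancel but always add in magnitude. -/
theorem extrapolation_amplification_magnitudes_add
    (w : ℕ → ℕ)
    (hw_pos : ∀ i, 1 ≤ i → 0 < w i)
    (hw_mono : ∀ i j, 1 ≤ i → i < j → w i < w j)
    (c : ℕ → ℕ → ℝ)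
    (hc : ∀ i j, 2 ≤ j → j ≤ i →
      c i j = (((w i : ℝ) / (w (i - j + 1) : ℝ)) ^ 2 - 1)⁻¹)
    (r : ℕ → ℕ → ℝ)
    (hr1 : ∀ i, 1 ≤ i → r i 1 = (-1 : ℝ) ^ (i - 1))
    (hr : ∀ i j, 2 ≤ j → j ≤ i →
      r i j = r i (j - 1) + c i j * (r i (j - 1) - r (i - 1) (j - 1))) :
    ∀ i j, 2 ≤ j → j ≤ i →
      |r i j| = (1 + c i j) * |r i (j - 1)| + c i j * |r (i - 1) (j - 1)| := by
  have hc_nonneg : ∀ i j, 2 ≤ j → j ≤ i → 0 ≤ c i j := by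
    intro i j hj hji
    rw [hc i j hj hji]
    exact inv_sq_div_sub_one_nonneg (by exact_mod_cast hw_pos _ le_add_self)
      (by exact_mod_cast (hw_mono _ _ le_add_self (by omega)).le)
  intro i j hj hji
  rw [hr i j hj hji]
  exact abs_add_mul_sub_of_mul_nonpos (hc_nonneg i j hj hji)
    (amplification_mul_nonpos hc_nonneg hr1 hr (by omega) (by omega))
end

section
/- Let (w_i)_{i≥1} be a strictly increasing sequence of positive integers, for 2 ≤ j ≤ i let c_{ij} := ((w_i / w_{i-j+1})² − 1)⁻¹, and define r_{ij} for 1 ≤ j ≤ i by r_{i1} := (−1)^{i−1} and r_{ij} := r_{i,j−1} + c_{ij}(r_{i,j−1} − r_{i−1,j−1}) for 2 ≤ j ≤ i. Then for each fixed i, the magnitude |r_{ij}| is strictly increasing in j: |r_{ij}| > |r_{i,j−1}| for all 2 ≤ j ≤ i. In particular |r_{ij}| ≥ 1 for all 1 ≤ j ≤ i. -/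
/-! The signed factors `s i j := (-1) ^ (i - 1) * r i j` satisfy
`s i j = s i (j - 1) + c i j * (s i (j - 1) + s (i - 1) (j - 1))`, since consecutive rows carry
opposite signs. The coefficients `c i j` are positive because `w` increases, so by induction on `j`
every `s i j` is at least `s i 1 = 1` and strictly grows with `j`; and `|r i j| = s i j`. -/

lemma extrapolation_coeff_pos {u v : ℝ} (hu : 0 < u) (huv : u < v) :
    0 < ((v / u) ^ 2 - 1)⁻¹ :=
  inv_pos.2 <| sub_pos.2 <| one_lt_pow₀ ((one_lt_div hu).2 huv) two_ne_zero

lemma lt_mul_add_mul_sub_of_one_le {σ a b c : ℝ} (hc : 0 < c) (ha : 1 ≤ σ * a)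
    (hb : 1 ≤ -σ * b) : σ * a < σ * (a + c * (a - b)) := by
  nlinarith

lemma abs_eq_neg_one_pow_mul_of_nonneg {n : ℕ} {x : ℝ} (h : 0 ≤ (-1 : ℝ) ^ n * x) :
    |x| = (-1 : ℝ) ^ n * x := by
  rw [← abs_of_nonneg h, abs_mul, abs_neg_one_pow, one_mul]

lemma neg_one_pow_mul_amplification_lt {c r : ℕ → ℕ → ℝ}
    (hr : ∀ i j, 2 ≤ j → j ≤ i →
      r i j = r i (j - 1) + c i j * (r i (j - 1) - r (i - 1) (j - 1)))
    (hc : ∀ i j, 2 ≤ j → j ≤ i → 0 < c i j) {i j : ℕ} (hj : 2 ≤ j) (hji : j ≤ i)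
    (hrow : 1 ≤ (-1 : ℝ) ^ (i - 1) * r i (j - 1))
    (hprev : 1 ≤ (-1 : ℝ) ^ (i - 1 - 1) * r (i - 1) (j - 1)) :
    (-1 : ℝ) ^ (i - 1) * r i (j - 1) < (-1 : ℝ) ^ (i - 1) * r i j := by
  have hsign : -(-1 : ℝ) ^ (i - 1) = (-1 : ℝ) ^ (i - 1 - 1) := by
    obtain ⟨k, rfl⟩ : ∃ k, i = k + 2 := ⟨i - 2, by omega⟩
    simp [pow_succ]
  rw [hr i j hj hji]
  exact lt_mul_add_mul_sub_of_one_le (hc i j hj hji) hrow (hsign ▸ hprev)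

lemma one_le_neg_one_pow_mul_amplification {c r : ℕ → ℕ → ℝ}
    (hr1 : ∀ i, 1 ≤ i → r i 1 = (-1 : ℝ) ^ (i - 1))
    (hr : ∀ i j, 2 ≤ j → j ≤ i →
      r i j = r i (j - 1) + c i j * (r i (j - 1) - r (i - 1) (j - 1)))
    (hc : ∀ i j, 2 ≤ j → j ≤ i → 0 < c i j) {j : ℕ} (hj : 1 ≤ j) :
    ∀ i, j ≤ i → 1 ≤ (-1 : ℝ) ^ (i - 1) * r i j := by
  induction j, hj using Nat.le_induction with
  | base =>
    intro i hi
    rw [hr1 i hi, ← mul_pow]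
    norm_num
  | succ j hj ih =>
    intro i hji
    have hlt := neg_one_pow_mul_amplification_lt hr hc (j := j + 1) (by omega) hji
      (ih i (by omega)) (ih (i - 1) (by omega))
    rw [Nat.add_sub_cancel] at hlt
    linarith [ih i (by omega)]

/-- With a strictly increasing positive support sequence, for each fixed `i` the
magnitude `|r i j|` of the round-off amplification factor is strictly increasing
in `j`; in particular `|r i j| ≥ 1` for all `1 ≤ j ≤ i`. -/
theorem extrapolation_amplification_strict_mono
    (w : ℕ → ℕ)
    (hw_pos : ∀ i, 1 ≤ i → 0 < w i)
    (hw_mono : ∀ i j, 1 ≤ i → i < j → w i < w j)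
    (c : ℕ → ℕ → ℝ)
    (hc : ∀ i j, 2 ≤ j → j ≤ i →
      c i j = (((w i : ℝ) / (w (i - j + 1) : ℝ)) ^ 2 - 1)⁻¹)
    (r : ℕ → ℕ → ℝ)
    (hr1 : ∀ i, 1 ≤ i → r i 1 = (-1 : ℝ) ^ (i - 1))
    (hr : ∀ i j, 2 ≤ j → j ≤ i →
      r i j = r i (j - 1) + c i j * (r i (j - 1) - r (i - 1) (j - 1))) :
    (∀ i j, 2 ≤ j → j ≤ i → |r i (j - 1)| < |r i j|) ∧
    (∀ i j, 1 ≤ j → j ≤ i → 1 ≤ |r i j|) := by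
  have hc_pos : ∀ i j, 2 ≤ j → j ≤ i → 0 < c i j := fun i j hj hji => by
    rw [hc i j hj hji]
    exact extrapolation_coeff_pos (mod_cast hw_pos _ (by omega))
      (mod_cast hw_mono _ _ (by omega) (by omega))
  have hbound {i j : ℕ} (hj : 1 ≤ j) (hji : j ≤ i) : 1 ≤ (-1 : ℝ) ^ (i - 1) * r i j :=
    one_le_neg_one_pow_mul_amplification hr1 hr hc_pos hj i hji
  have habs {i j : ℕ} (hj : 1 ≤ j) (hji : j ≤ i) : |r i j| = (-1 : ℝ) ^ (i - 1) * r i j :=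
    abs_eq_neg_one_pow_mul_of_nonneg (zero_le_one.trans (hbound hj hji))
  refine ⟨fun i j hj hji => ?_, fun i j hj hji => habs hj hji ▸ hbound hj hji⟩
  rw [habs (by omega) (by omega), habs (by omega) hji]
  exact neg_one_pow_mul_amplification_lt hr hc_pos hj hji
    (hbound (by omega) (by omega)) (hbound (by omega) (by omega))
end

section
/- Let w_i := 2^i be the Romberg sequence, c_{ij} := ((w_i / w_{i-j+1})² − 1)⁻¹, and define r_{ij} for 1 ≤ j ≤ i by r_{i1} := (−1)^{i−1} and r_{ij} := r_{i,j−1} + c_{ij}(r_{i,j−1} − r_{i−1,j−1}) for 2 ≤ j ≤ i. Then |r_{ij}| = ∏_{k=2}^{j} (4^{k−1} + 1)/(4^{k−1} − 1) for all 1 ≤ j ≤ i (the empty product for j = 1 being 1); in particular |r_{ij}| depends only on j and not on i. -/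
/-!
Since `w i / w (i - j) = 2 ^ j`, the coefficient `c i (j + 1) = (4 ^ j - 1)⁻¹` does not depend
on `i`. By induction on `j`, `r i j = (-1) ^ (i - 1) * rombergGain j`: the two
entries `r i j` and `r (i - 1) j` feeding the recurrence then have opposite signs, so
`r i (j + 1) = r i j * (1 + 2 / (4 ^ j - 1)) = r i j * (4 ^ j + 1) / (4 ^ j - 1)`.
-/

open Finset

noncomputable def rombergGain (j : ℕ) : ℝ :=
  ∏ k ∈ Icc 2 j, ((4 : ℝ) ^ (k - 1) + 1) / ((4 : ℝ) ^ (k - 1) - 1)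

lemma one_lt_four_pow {n : ℕ} (hn : n ≠ 0) : (1 : ℝ) < 4 ^ n :=
  one_lt_pow₀ (by norm_num) hn

lemma rombergGain_pos (j : ℕ) : 0 < rombergGain j := by
  refine prod_pos fun k hk => ?_
  have h := one_lt_four_pow (n := k - 1) (by grind)
  apply div_pos <;> linarith

lemma rombergGain_one : rombergGain 1 = 1 := rfl

lemma rombergGain_succ {j : ℕ} (hj : 1 ≤ j) :
    rombergGain (j + 1) = rombergGain j * (((4 : ℝ) ^ j + 1) / ((4 : ℝ) ^ j - 1)) := by
  rw [rombergGain, prod_Icc_succ_top (by omega), Nat.add_sub_cancel, rombergGain]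

lemma add_inv_sub_one_mul_sub_neg {K : Type*} [Field K] (a x : K) (hx : x ≠ 1) :
    a + (x - 1)⁻¹ * (a - -a) = a * ((x + 1) / (x - 1)) := by
  have : x - 1 ≠ 0 := sub_ne_zero.mpr hx
  field_simp
  ring

lemma two_pow_div_two_pow_sub_sq {i j : ℕ} (hj : j ≤ i) :
    ((2 : ℝ) ^ i / 2 ^ (i - j)) ^ 2 = 4 ^ j := by
  rw [div_eq_mul_inv, ← pow_sub₀ _ two_ne_zero (Nat.sub_le i j), Nat.sub_sub_self hj, ← pow_mul, mul_comm,
    pow_mul]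
  norm_num

lemma rombergCoeff_eq (w : ℕ → ℕ) (hw : ∀ i, w i = 2 ^ i) (c : ℕ → ℕ → ℝ)
    (hc : ∀ i j, 2 ≤ j → j ≤ i →
      c i j = (((w i : ℝ) / (w (i - j + 1) : ℝ)) ^ 2 - 1)⁻¹)
    {i j : ℕ} (hj : 1 ≤ j) (hji : j < i) :
    c i (j + 1) = ((4 : ℝ) ^ j - 1)⁻¹ := by
  rw [hc i (j + 1) (by omega) hji, hw, hw, show i - (j + 1) + 1 = i - j by omega]
  push_cast
  rw [two_pow_div_two_pow_sub_sq hji.le]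

lemma rombergAmplification_eq (c r : ℕ → ℕ → ℝ)
    (hc : ∀ i j, 1 ≤ j → j < i → c i (j + 1) = ((4 : ℝ) ^ j - 1)⁻¹)
    (hr1 : ∀ i, 1 ≤ i → r i 1 = (-1 : ℝ) ^ (i - 1))
    (hr : ∀ i j, 2 ≤ j → j ≤ i →
      r i j = r i (j - 1) + c i j * (r i (j - 1) - r (i - 1) (j - 1)))
    {j : ℕ} (hj : 1 ≤ j) : ∀ i, j ≤ i → r i j = (-1 : ℝ) ^ (i - 1) * rombergGain j := by
  induction j, hj using Nat.le_induction with
  | base => intro i hi; rw [hr1 i hi, rombergGain_one, mul_one]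
  | succ j hj ih =>
    intro i hi
    obtain ⟨m, rfl⟩ : ∃ m, i = m + 2 := ⟨i - 2, by omega⟩
    have hprev : r (m + 1) j = -((-1 : ℝ) ^ (m + 1) * rombergGain j) := by
      rw [ih (m + 1) (by omega), Nat.add_sub_cancel, pow_succ]
      ring
    rw [hr _ _ (by omega) hi, Nat.add_sub_cancel, show m + 2 - 1 = m + 1 from rfl,
      ih _ (by omega), hc _ _ hj (by omega), show m + 2 - 1 = m + 1 from rfl, hprev,
      add_inv_sub_one_mul_sub_neg _ _ (one_lt_four_pow (by omega)).ne', rombergGain_succ hj,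
      mul_assoc]

/-- For the Romberg sequence `w i = 2^i`, the magnitude of the round-off
amplification factor is `|r i j| = ∏_{k=2}^{j} (4^(k-1) + 1) / (4^(k-1) - 1)`
for all `1 ≤ j ≤ i` (the empty product for `j = 1` being `1`); in particular
it depends only on `j` and not on `i`. -/
theorem romberg_amplification_product_formula
    (w : ℕ → ℕ) (hw : ∀ i, w i = 2 ^ i)
    (c : ℕ → ℕ → ℝ)
    (hc : ∀ i j, 2 ≤ j → j ≤ i →
      c i j = (((w i : ℝ) / (w (i - j + 1) : ℝ)) ^ 2 - 1)⁻¹)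
    (r : ℕ → ℕ → ℝ)
    (hr1 : ∀ i, 1 ≤ i → r i 1 = (-1 : ℝ) ^ (i - 1))
    (hr : ∀ i j, 2 ≤ j → j ≤ i →
      r i j = r i (j - 1) + c i j * (r i (j - 1) - r (i - 1) (j - 1))) :
    ∀ i j, 1 ≤ j → j ≤ i →
      |r i j| = ∏ k ∈ Finset.Icc 2 j,
        ((4 : ℝ) ^ (k - 1) + 1) / ((4 : ℝ) ^ (k - 1) - 1) := by
  intro i j hj hji
  have hc' : ∀ i j, 1 ≤ j → j < i → c i (j + 1) = ((4 : ℝ) ^ j - 1)⁻¹ :=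
    fun _ _ => rombergCoeff_eq w hw c hc
  rw [rombergAmplification_eq c r hc' hr1 hr hj i hji, abs_mul, abs_pow, abs_neg, abs_one,
    one_pow, one_mul, abs_of_pos (rombergGain_pos j), rombergGain]
end

section
/- Let w_i := 2^i be the Romberg sequence, c_{ij} := ((w_i / w_{i-j+1})² − 1)⁻¹, and define r_{ij} for 1 ≤ j ≤ i by r_{i1} := (−1)^{i−1} and r_{ij} := r_{i,j−1} + c_{ij}(r_{i,j−1} − r_{i−1,j−1}) for 2 ≤ j ≤ i. Then |r_{ij}| < 2 for all 1 ≤ j ≤ i; i.e. with the Romberg sequence the propagation effect of the initial alternating round-off errors through the extrapolation process is less than a factor of two. -/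
/-!
Along each column the alternating initial errors keep alternating, so
`r i j = (-1)^(i-1) * A j` where, with `w i / w (i-j+1) = 2^(j-1)`, the factor `A j = rombergGrowth j` is
the partial product `∏_{1 ≤ k < j} (4^k + 1) / (4^k - 1)`. From `j = 2` on, `A j ≤ 2 - 16 / (3 * 4^j)`
is preserved by multiplying with the next factor, so `A j < 2`.
-/

open Finset

noncomputable def rombergGrowth (j : ℕ) : ℝ :=
  ∏ k ∈ Ico 1 j, ((4 : ℝ) ^ k + 1) / (4 ^ k - 1)

lemma one_lt_four_pow_s6 {k : ℕ} (hk : 1 ≤ k) : (1 : ℝ) < 4 ^ k :=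
  one_lt_pow₀ (by norm_num) (by omega)

lemma rombergGrowth_succ {k : ℕ} (hk : 1 ≤ k) :
    rombergGrowth (k + 1) = rombergGrowth k * (((4 : ℝ) ^ k + 1) / (4 ^ k - 1)) :=
  prod_Ico_succ_top hk _

lemma rombergGrowth_of_le_one {j : ℕ} (hj : j ≤ 1) : rombergGrowth j = 1 :=
  prod_eq_one fun k hk => by simp only [mem_Ico] at hk; omega

lemma rombergGrowth_le {j : ℕ} (hj : 2 ≤ j) : rombergGrowth j ≤ 2 - 16 / (3 * 4 ^ j) := by
  induction j, hj using Nat.le_induction with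
  | base => norm_num [rombergGrowth_succ, rombergGrowth_of_le_one]
  | succ k hk ih =>
    rw [rombergGrowth_succ (by omega), pow_succ]
    set x : ℝ := 4 ^ k
    have hx : 1 < x := one_lt_four_pow_s6 (by omega)
    have hstep : (2 - 16 / (3 * x)) * ((x + 1) / (x - 1)) ≤ 2 - 16 / (3 * (x * 4)) := by
      rw [← sub_nonneg]
      have hx1 : 0 < x - 1 := by linarith
      have key : 2 - 16 / (3 * (x * 4)) - (2 - 16 / (3 * x)) * ((x + 1) / (x - 1))
          = 20 / (3 * x * (x - 1)) := by
        field_simp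
        ring
      rw [key]
      positivity
    calc rombergGrowth k * ((x + 1) / (x - 1))
        ≤ (2 - 16 / (3 * x)) * ((x + 1) / (x - 1)) :=
          mul_le_mul_of_nonneg_right ih (div_nonneg (by linarith) (by linarith))
      _ ≤ _ := hstep

lemma rombergGrowth_lt_two (j : ℕ) : rombergGrowth j < 2 := by
  rcases Nat.lt_or_ge j 2 with hj | hj
  · rw [rombergGrowth_of_le_one (by omega)]
    norm_num
  · have : 0 < 16 / (3 * (4 : ℝ) ^ j) := by positivity
    linarith [rombergGrowth_le hj]

lemma rombergGrowth_pos (j : ℕ) : 0 < rombergGrowth j :=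
  prod_pos fun k hk => by
    have := one_lt_four_pow_s6 (mem_Ico.1 hk).1
    exact div_pos (by linarith) (by linarith)

lemma romberg_ratio_sq {i j : ℕ} (hj : 1 ≤ j) (hji : j ≤ i) :
    ((2 : ℝ) ^ i / 2 ^ (i - j + 1)) ^ 2 = 4 ^ (j - 1) := by
  have hquot : (2 : ℝ) ^ i / 2 ^ (i - j + 1) = 2 ^ (j - 1) :=
    div_eq_of_eq_mul (by positivity) (by rw [← pow_add]; congr 1; omega)
  rw [hquot, ← pow_mul, mul_comm, pow_mul]
  norm_num

lemma romberg_tableau_eq (c r : ℕ → ℕ → ℝ)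
    (hc : ∀ i j, 2 ≤ j → j ≤ i → c i j = ((4 : ℝ) ^ (j - 1) - 1)⁻¹)
    (hr1 : ∀ i, 1 ≤ i → r i 1 = (-1 : ℝ) ^ (i - 1))
    (hr : ∀ i j, 2 ≤ j → j ≤ i →
      r i j = r i (j - 1) + c i j * (r i (j - 1) - r (i - 1) (j - 1))) :
    ∀ j i, 1 ≤ j → j ≤ i → r i j = (-1 : ℝ) ^ (i - 1) * rombergGrowth j := by
  intro j
  induction j with
  | zero => omega
  | succ k ih =>
    intro i hk hki
    rcases Nat.eq_zero_or_pos k with rfl | hk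
    · rw [hr1 i hki, rombergGrowth_of_le_one le_rfl, mul_one]
    · have hsign : (-1 : ℝ) ^ (i - 1 - 1) = -(-1) ^ (i - 1) := by
        rw [show i - 1 = i - 1 - 1 + 1 by omega, pow_succ, Nat.add_sub_cancel]
        ring
      have hx : (4 : ℝ) ^ k - 1 ≠ 0 := (sub_pos.2 (one_lt_four_pow_s6 hk)).ne'
      rw [hr i (k + 1) (by omega) hki, Nat.add_sub_cancel, ih i hk (by omega),
        ih (i - 1) hk (by omega), hc i (k + 1) (by omega) hki, Nat.add_sub_cancel,
        rombergGrowth_succ hk, hsign]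
      field_simp
      ring

/-- For the Romberg sequence `w i = 2^i`, the round-off propagation effect of
the extrapolation process is less than a factor of two: `|r i j| < 2` for all
`1 ≤ j ≤ i`. -/
theorem romberg_amplification_lt_two
    (w : ℕ → ℕ) (hw : ∀ i, w i = 2 ^ i)
    (c : ℕ → ℕ → ℝ)
    (hc : ∀ i j, 2 ≤ j → j ≤ i →
      c i j = (((w i : ℝ) / (w (i - j + 1) : ℝ)) ^ 2 - 1)⁻¹)
    (r : ℕ → ℕ → ℝ)
    (hr1 : ∀ i, 1 ≤ i → r i 1 = (-1 : ℝ) ^ (i - 1))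
    (hr : ∀ i j, 2 ≤ j → j ≤ i →
      r i j = r i (j - 1) + c i j * (r i (j - 1) - r (i - 1) (j - 1))) :
    ∀ i j, 1 ≤ j → j ≤ i → |r i j| < 2 := by
  have hc4 : ∀ i j, 2 ≤ j → j ≤ i → c i j = ((4 : ℝ) ^ (j - 1) - 1)⁻¹ := by
    intro i j hj hji
    rw [hc i j hj hji, hw, hw]
    push_cast
    rw [romberg_ratio_sq (by omega) hji]
  intro i j hj hji
  rw [romberg_tableau_eq c r hc4 hr1 hr j i hj hji, abs_mul, abs_pow, abs_neg, abs_one,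
    one_pow, one_mul, abs_of_pos (rombergGrowth_pos j)]
  exact rombergGrowth_lt_two j
end

section
/- The infinite product ∏_{k=1}^{∞} (4^k + 1)/(4^k − 1) converges (i.e. the partial products ∏_{k=1}^{n} (4^k + 1)/(4^k − 1) form a convergent, strictly increasing sequence) and its value is strictly less than 2. -/
/-!
Write `P n` for the partial products. With `x = 4 ^ n`, the factor `(4x + 1)/(4x - 1)` is at most
`(6x - 1)/(6x - 4) = g (n + 1) / g n` for `g n = 1 - 2 / (3 * 4 ^ n)`, so `P n / g n` decreases.
Since `g n < 1`, every `P n` lies below `P 2 / g 2 = 408/207 < 2`, and the increasing sequence `P n`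
converges to its supremum.
-/

open Finset

noncomputable def rombergProduct (n : ℕ) : ℝ :=
  ∏ k ∈ Icc 1 n, ((4 : ℝ) ^ k + 1) / ((4 : ℝ) ^ k - 1)

/-- `rombergProduct n / (1 - 2 / (3 * 4 ^ n))`. -/
noncomputable def rombergMajorant (n : ℕ) : ℝ :=
  rombergProduct n * (3 * 4 ^ n / (3 * 4 ^ n - 2))

lemma rombergProduct_succ (n : ℕ) :
    rombergProduct (n + 1) =
      rombergProduct n * (((4 : ℝ) ^ (n + 1) + 1) / ((4 : ℝ) ^ (n + 1) - 1)) :=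
  prod_Icc_succ_top (Nat.le_add_left 1 n) _

lemma one_lt_rombergFactor (n : ℕ) :
    1 < ((4 : ℝ) ^ (n + 1) + 1) / ((4 : ℝ) ^ (n + 1) - 1) := by
  have h : (1 : ℝ) < 4 ^ (n + 1) := one_lt_pow₀ (by norm_num) n.succ_ne_zero
  rw [one_lt_div (by linarith)]
  linarith

lemma rombergProduct_pos (n : ℕ) : 0 < rombergProduct n := by
  induction n with
  | zero => simp [rombergProduct]
  | succ n ih =>
    rw [rombergProduct_succ]
    exact mul_pos ih (zero_lt_one.trans (one_lt_rombergFactor n))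

lemma strictMono_rombergProduct : StrictMono rombergProduct :=
  strictMono_nat_of_lt_succ fun n => by
    rw [rombergProduct_succ]
    exact lt_mul_of_one_lt_right (rombergProduct_pos n) (one_lt_rombergFactor n)

lemma rombergProduct_le_rombergMajorant (n : ℕ) : rombergProduct n ≤ rombergMajorant n := by
  have hx : (1 : ℝ) ≤ 4 ^ n := one_le_pow₀ (by norm_num)
  refine le_mul_of_one_le_right (rombergProduct_pos n).le ?_
  rw [one_le_div (by linarith)]
  linarith

lemma rombergFactor_mul_le {x : ℝ} (hx : 1 ≤ x) :
    (4 * x + 1) / (4 * x - 1) * (3 * (4 * x) / (3 * (4 * x) - 2)) ≤ 3 * x / (3 * x - 2) := by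
  rw [div_mul_div_comm, div_le_div_iff₀ (by nlinarith) (by linarith)]
  nlinarith

lemma antitone_rombergMajorant : Antitone rombergMajorant :=
  antitone_nat_of_succ_le fun n => by
    have hx : (1 : ℝ) ≤ 4 ^ n := one_le_pow₀ (by norm_num)
    rw [rombergMajorant, rombergMajorant, rombergProduct_succ, mul_assoc, pow_succ' 4 n]
    exact mul_le_mul_of_nonneg_left (rombergFactor_mul_le hx) (rombergProduct_pos n).le

lemma rombergMajorant_two : rombergMajorant 2 = 408 / 207 := by
  norm_num [rombergMajorant, rombergProduct, prod_Icc_succ_top]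

lemma rombergProduct_le (n : ℕ) : rombergProduct n ≤ 408 / 207 :=
  calc rombergProduct n ≤ rombergProduct (n + 2) := strictMono_rombergProduct.monotone (by omega)
    _ ≤ rombergMajorant (n + 2) := rombergProduct_le_rombergMajorant _
    _ ≤ rombergMajorant 2 := antitone_rombergMajorant (by omega)
    _ = 408 / 207 := rombergMajorant_two

/-- The infinite product `∏_{k=1}^{∞} (4^k + 1)/(4^k - 1)` converges (its
partial products form a strictly increasing convergent sequence) and its value
is strictly less than `2`. -/
theorem romberg_infinite_product_lt_two :
    StrictMono (fun n : ℕ =>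
      ∏ k ∈ Finset.Icc 1 n, ((4 : ℝ) ^ k + 1) / ((4 : ℝ) ^ k - 1)) ∧
    ∃ l : ℝ,
      Filter.Tendsto (fun n : ℕ =>
          ∏ k ∈ Finset.Icc 1 n, ((4 : ℝ) ^ k + 1) / ((4 : ℝ) ^ k - 1))
        Filter.atTop (nhds l) ∧ l < 2 := by
  have hbdd : BddAbove (Set.range rombergProduct) := ⟨408 / 207, by
    rintro _ ⟨n, rfl⟩
    exact rombergProduct_le n⟩
  refine ⟨strictMono_rombergProduct, ⨆ n, rombergProduct n,
    tendsto_atTop_ciSup strictMono_rombergProduct.monotone hbdd, ?_⟩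
  calc ⨆ n, rombergProduct n ≤ 408 / 207 := ciSup_le rombergProduct_le
    _ < 2 := by norm_num
end
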